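/- arXiv:2201.13346 — 4 statements merged into one kernel-verified Lean document; each statement's English description precedes it below -/
import Mathlib

section
/- Let I ⊆ u be an ad-nilpotent ideal of a Borel subalgebra b of a semisimple Lie algebra g, with root set Φ_I ⊆ Φ⁺. Suppose β ∈ Φ_I is a minimal root of Φ_I (with respect to the standard partial order on positive roots), α ∈ Δ is a simple root with ⟨β, α^∨⟩ = −1, and Φ_I is invariant under the simple reflection s_α. Then α + β is a root, α + β ∈ Φ_{I'} where Φ_{I'} = Φ_I \ {β}, and α + β is a minimal root of Φ_{I'}. -/
/-- Predicate for additive homomorphisms (removed from Mathlib; old `Mathlib.Deprecated` meaning). -/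
structure IsAddHom {α β : Type*} [Add α] [Add β] (f : α → β) : Prop where
  map_add : ∀ x y, f (x + y) = f x + f y


open Classical in
lemma sum_shift {V : Type*} [AddCommGroup V] [DecidableEq V]
    (Δ : Set V) (α : V) (hα : α ∈ Δ)
    (s₀ : Finset V) (hs₀ : (s₀ : Set V) ⊆ Δ) (c : V → ℕ) (m : ℤ)
    (hm : 0 ≤ (if α ∈ s₀ then (c α : ℤ) else 0) + m) :
    ∃ (s : Finset V) (c' : V → ℕ), (s : Set V) ⊆ Δ ∧
      ∑ a ∈ s, (c' a : ℤ) • a = (∑ a ∈ s₀, (c a : ℤ) • a) + m • α := by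
  classical
  set d : V → ℤ := fun a => (if a ∈ s₀ then (c a : ℤ) else 0) + (if a = α then m else 0) with hd
  refine ⟨insert α s₀, fun a => (d a).toNat, ?_, ?_⟩
  · intro a ha
    simp only [Finset.coe_insert, Set.mem_insert_iff] at ha
    rcases ha with rfl | ha
    · exact hα
    · exact hs₀ ha
  · have hnn : ∀ a ∈ insert α s₀, ((d a).toNat : ℤ) • a = d a • a := by
      intro a ha
      rw [Int.toNat_of_nonneg]
      by_cases h : a = α
      · subst h; simpa only [hd, ↓reduceIte] using hm
      · simp only [hd, if_neg h, add_zero]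
        split <;> simp
    rw [Finset.sum_congr rfl hnn]
    simp only [hd, add_smul, ite_smul, zero_smul, Finset.sum_add_distrib]
    rw [Finset.sum_ite_mem, Finset.inter_eq_right.2 (Finset.subset_insert _ _),
        Finset.sum_ite_eq' (insert α s₀) α (fun a => m • a)]
    simp

/-- Let `Φ_I ⊆ Φ⁺` be the root set of an ad-nilpotent ideal (an upper set of
positive roots). If `β` is a minimal root of `Φ_I`, `α` is a simple root with
`⟨β, α^∨⟩ = −1`, and `Φ_I` is invariant under the simple reflection `s_α`, then `α + β` is
a root, `α + β` belongs to `Φ_{I'} = Φ_I \ {β}`, and `α + β` is a minimal root of `Φ_{I'}`. -/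
theorem stmt2
    {V : Type*} [AddCommGroup V] [Module ℝ V]
    (Φ Φpos Δ ΦI : Set V)
    (hΔ : Δ ⊆ Φpos) (hposΦ : Φpos ⊆ Φ)
    (hΦ : Φ = Φpos ∪ (-Φpos)) (hdisj : Disjoint Φpos (-Φpos))
    -- the integral coroot pairing `pair v α = ⟨v, α^∨⟩`
    (pair : V → V → ℤ)
    (hpair2 : ∀ α ∈ Φ, pair α α = 2)
    (hpairadd : ∀ α : V, IsAddHom (fun v => pair v α))
    -- for distinct simple roots `α, α'` one has `⟨α', α^∨⟩ ≤ 0`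
    (hobtuse : ∀ α ∈ Δ, ∀ α' ∈ Δ, α ≠ α' → pair α' α ≤ 0)
    -- reflections preserve the root system
    (hrefl : ∀ α ∈ Δ, ∀ γ ∈ Φ, γ - pair γ α • α ∈ Φ)
    -- root strings: if `⟨β, α^∨⟩ < 0` then `α + β` is a root
    (hstring : ∀ α ∈ Δ, ∀ β ∈ Φ, α ≠ -β → pair β α < 0 → α + β ∈ Φ)
    -- `Φ_I` is an upper set of positive roots
    (hIpos : ΦI ⊆ Φpos)
    (hupper : ∀ γ ∈ ΦI, ∀ δ ∈ Φpos, γ + δ ∈ Φ → γ + δ ∈ ΦI)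
    -- the partial order on positive roots: `γ ≤ δ` iff `δ − γ` is a nonnegative
    -- integer combination of simple roots
    (le : V → V → Prop)
    (hle : ∀ γ δ : V, le γ δ ↔ ∃ (s : Finset V) (c : V → ℕ),
      (s : Set V) ⊆ Δ ∧ δ - γ = ∑ a ∈ s, (c a : ℤ) • a)
    -- the hypotheses of the statement
    (β : V) (hβ : β ∈ ΦI)
    (hβmin : ∀ γ ∈ ΦI, le γ β → γ = β)
    (α : V) (hα : α ∈ Δ)
    (hpairβα : pair β α = -1)
    (hsα : (fun v => v - pair v α • α) '' ΦI = ΦI) :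
    α + β ∈ Φ ∧ α + β ∈ ΦI \ {β} ∧
      (∀ γ ∈ ΦI \ {β}, le γ (α + β) → γ = α + β) := by
  classical
  have hαβI : α + β ∈ ΦI := by
    have h1 : (fun v => v - pair v α • α) β ∈ (fun v => v - pair v α • α) '' ΦI :=
      Set.mem_image_of_mem _ hβ
    rw [hsα] at h1
    simpa [hpairβα, sub_neg_eq_add, add_comm] using h1
  have hαβΦ : α + β ∈ Φ := hposΦ (hIpos hαβI)
  have hαne : α ≠ 0 := by
    intro h
    have h1 : α ∈ Φpos := hΔ hα
    have h2 : α ∈ -Φpos := by rw [h] at h1 ⊢; simpa using h1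
    exact Set.disjoint_left.1 hdisj h1 h2
  have hne : α + β ≠ β := fun h => hαne (by rwa [add_eq_right] at h)
  refine ⟨hαβΦ, ⟨hαβI, hne⟩, ?_⟩
  intro γ hγ hleγ
  obtain ⟨hγI, hγne⟩ := hγ
  rw [Set.mem_singleton_iff] at hγne
  rw [hle] at hleγ
  obtain ⟨s₀, c, hs₀, heq⟩ := hleγ
  set g : V →+ ℤ := AddMonoidHom.mk' (fun v => pair v α) (hpairadd α).map_add with hg
  have gval : ∀ v, g v = pair v α := fun v => rfl
  have gα : g α = 2 := hpair2 α (hposΦ (hΔ hα))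
  have gβ : g β = -1 := hpairβα
  set k : ℤ := pair γ α with hk
  have gγ : g γ = k := rfl
  by_cases hk0 : k ≤ 0
  · -- show α ∈ s₀ and 1 ≤ c α, then le γ β
    have hsum : g (α + β - γ) = 1 - k := by rw [map_sub, map_add, gα, gβ, gγ]; ring
    have hsum2 : g (α + β - γ) = ∑ a ∈ s₀, (c a : ℤ) * g a := by
      rw [heq, map_sum]
      exact Finset.sum_congr rfl fun a _ => by rw [map_zsmul, smul_eq_mul]
    have hin : α ∈ s₀ ∧ 1 ≤ c α := by
      by_contra hcon
      have hle0 : ∑ a ∈ s₀, (c a : ℤ) * g a ≤ 0 := by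
        apply Finset.sum_nonpos
        intro a ha
        by_cases haα : a = α
        · subst haα
          have : c a = 0 := by
            rcases not_and_or.1 hcon with h | h
            · exact absurd ha h
            · omega
          simp [this]
        · have h1 : g a ≤ 0 := hobtuse α hα a (hs₀ ha) (fun h => haα h.symm)
          exact mul_nonpos_of_nonneg_of_nonpos (by positivity) h1
      omega
    obtain ⟨s', c', hs', heq'⟩ := sum_shift Δ α hα s₀ hs₀ c (-1)
      (by rw [if_pos hin.1]; have := hin.2; omega)
    have hleγβ : le γ β := by
      rw [hle]
      refine ⟨s', c', hs', ?_⟩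
      rw [heq']
      rw [← heq]
      abel
    exact absurd (hβmin γ hγI hleγβ) hγne
  · push_neg at hk0
    have hsγI : γ - k • α ∈ ΦI := by
      have h1 : (fun v => v - pair v α • α) γ ∈ (fun v => v - pair v α • α) '' ΦI :=
      Set.mem_image_of_mem _ hγI
      rw [hsα] at h1
      exact h1
    obtain ⟨s', c', hs', heq'⟩ := sum_shift Δ α hα s₀ hs₀ c (k - 1)
      (by have h2 : (0:ℤ) ≤ if α ∈ s₀ then (c α : ℤ) else 0 := by split <;> simp
          omega)
    have hleβ : le (γ - k • α) β := by
      rw [hle]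
      refine ⟨s', c', hs', ?_⟩
      rw [heq', ← heq, sub_smul, one_smul]
      abel
    have heqβ : γ - k • α = β := hβmin _ hsγI hleβ
    have hγval : γ = β + k • α := by rw [← heqβ]; abel
    have hkval : k = -1 + k * 2 := by
      have := gγ
      rw [hγval, map_add, map_zsmul, gβ, gα, smul_eq_mul] at this
      omega
    have hk1 : k = 1 := by omega
    rw [hγval, hk1, one_smul, add_comm]
end

section
/- In the type A_{n−1} root system with positive roots ε_i − ε_j for 1 ≤ i < j ≤ n, let h be a Hessenberg function and Φ_{I_h} = {ε_i − ε_j : h(i) < j} its associated upper set. A root β = ε_i − ε_j ∈ Φ_{I_h} is a minimal root of Φ_{I_h} if and only if j = h(i) + 1 and h(i) < h(i+1). -/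
/-- the standard basis weight `ε_i` of type `A_{n-1}` (1-indexed) -/
def eps (i : ℕ) : ℕ → ℤ := fun k => if k = i then 1 else 0

/-- `h` is a Hessenberg function on `{1, …, n}` -/
def IsHess (n : ℕ) (h : ℕ → ℕ) : Prop :=
  (∀ i, 1 ≤ i → i < n → h i ≤ h (i + 1)) ∧ (∀ i, 1 ≤ i → i ≤ n → i ≤ h i ∧ h i ≤ n)

/-- the upper set `Φ_{I_h} = {ε_i − ε_j : 1 ≤ i < j ≤ n, h(i) < j}` -/
def hessRoots (n : ℕ) (h : ℕ → ℕ) : Set (ℕ → ℤ) :=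
  {v | ∃ i j, 1 ≤ i ∧ i < j ∧ j ≤ n ∧ h i < j ∧ v = eps i - eps j}

/-- the partial order on positive roots: `γ ≤ δ` iff `δ − γ` is a nonnegative integer
combination of the simple roots `α_k = ε_k − ε_{k+1}`, `1 ≤ k ≤ n−1` -/
def rootLE (n : ℕ) (γ δ : ℕ → ℤ) : Prop :=
  ∃ c : ℕ → ℕ, δ - γ = ∑ k ∈ Finset.Icc 1 (n - 1), (c k : ℤ) • (eps k - eps (k + 1))

lemma sum_eps (x : ℕ) (s : Finset ℕ) : ∑ m ∈ s, eps x m = if x ∈ s then 1 else 0 := by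
  simp [eps, Finset.sum_ite_eq' s x (fun _ => (1:ℤ))]

lemma eps_sub_inj {a b i j : ℕ} (hab : a < b) (hij : i < j)
    (heq : eps a - eps b = eps i - eps j) : a = i ∧ b = j := by
  have h1 := congrFun heq a
  have h2 := congrFun heq j
  simp only [Pi.sub_apply, eps] at h1 h2
  constructor
  · by_contra hne
    split_ifs at h1 <;> omega
  · by_contra hne
    split_ifs at h2 <;> omega

lemma telescope (s t : ℕ) (h1s : 1 ≤ s) (hst : s ≤ t) :
    ∑ k ∈ Finset.Icc s (t - 1), (eps k - eps (k + 1)) = eps s - eps t := by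
  induction t, hst using Nat.le_induction with
  | base =>
    have : Finset.Icc s (s - 1) = ∅ := by
      apply Finset.Icc_eq_empty; omega
    simp [this]
  | succ t ht ih =>
    rcases Nat.eq_or_lt_of_le ht with rfl | hlt
    · have h1 : Finset.Icc s (s + 1 - 1) = {s} := by
        simp
      rw [h1]
      simp
    · have h1 : s ≤ t - 1 + 1 := by omega
      have h2 : t + 1 - 1 = (t-1) + 1 := by omega
      rw [h2, Finset.sum_Icc_succ_top h1, ih]
      have h3 : t - 1 + 1 = t := by omega
      rw [h3]
      abel

lemma rootLE_iff {n a b i j : ℕ} (ha : 1 ≤ a) (hab : a < b) (hb : b ≤ n)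
    (hi : 1 ≤ i) (hij : i < j) (hj : j ≤ n) :
    rootLE n (eps a - eps b) (eps i - eps j) ↔ i ≤ a ∧ b ≤ j := by
  constructor
  · rintro ⟨c, hc⟩
    have key : ∀ t : ℕ, (0:ℤ) ≤ ∑ m ∈ Finset.Icc 1 t, ((eps i - eps j) - (eps a - eps b)) m := by
      intro t
      rw [hc]
      rw [show (∑ m ∈ Finset.Icc 1 t, (∑ k ∈ Finset.Icc 1 (n-1), (c k : ℤ) • (eps k - eps (k+1))) m)
          = ∑ k ∈ Finset.Icc 1 (n-1), ∑ m ∈ Finset.Icc 1 t, (c k : ℤ) * ((eps k - eps (k+1)) m) by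
        rw [Finset.sum_comm]
        apply Finset.sum_congr rfl
        intro m _
        simp [Finset.sum_apply, Finset.mul_sum]]
      apply Finset.sum_nonneg
      intro k hk
      simp only [Finset.mem_Icc] at hk
      rw [← Finset.mul_sum]
      apply mul_nonneg (by positivity)
      have : ∑ m ∈ Finset.Icc 1 t, (eps k - eps (k+1)) m
          = (if k ∈ Finset.Icc 1 t then (1:ℤ) else 0) - (if k+1 ∈ Finset.Icc 1 t then (1:ℤ) else 0) := by
        simp [Pi.sub_apply, Finset.sum_sub_distrib, sum_eps]
      rw [this]
      simp only [Finset.mem_Icc]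
      split_ifs <;> omega
    have eval : ∀ t : ℕ, ∑ m ∈ Finset.Icc 1 t, ((eps i - eps j) - (eps a - eps b)) m
        = ((if i ∈ Finset.Icc 1 t then (1:ℤ) else 0) - (if j ∈ Finset.Icc 1 t then (1:ℤ) else 0))
          - ((if a ∈ Finset.Icc 1 t then (1:ℤ) else 0) - (if b ∈ Finset.Icc 1 t then (1:ℤ) else 0)) := by
      intro t
      simp [Pi.sub_apply, Finset.sum_sub_distrib, sum_eps]
    constructor
    · by_contra hia
      have k1 := key a
      rw [eval a] at k1
      simp only [Finset.mem_Icc] at k1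
      split_ifs at k1 <;> omega
    · by_contra hbj
      have k1 := key (b - 1)
      rw [eval (b-1)] at k1
      simp only [Finset.mem_Icc] at k1
      split_ifs at k1 <;> omega
  · rintro ⟨hia, hbj⟩
    refine ⟨fun k => if k ∈ Finset.Icc i (a-1) ∪ Finset.Icc b (j-1) then 1 else 0, ?_⟩
    have hsub : Finset.Icc i (a-1) ∪ Finset.Icc b (j-1) ⊆ Finset.Icc 1 (n-1) := by
      intro k hk
      simp only [Finset.mem_union, Finset.mem_Icc] at hk ⊢
      omega
    have hdisj : Disjoint (Finset.Icc i (a-1)) (Finset.Icc b (j-1)) := by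
      rw [Finset.disjoint_left]
      intro k hk1 hk2
      simp only [Finset.mem_Icc] at hk1 hk2
      omega
    push_cast
    simp only [ite_smul, one_smul, zero_smul]
    rw [Finset.sum_ite_mem, Finset.inter_eq_right.mpr hsub,
      Finset.sum_union hdisj, telescope i a hi hia,
      telescope b j (by omega) hbj]
    abel

lemma hess_mono {n : ℕ} {h : ℕ → ℕ} (hh : IsHess n h) {s t : ℕ} (hs : 1 ≤ s)
    (hst : s ≤ t) (ht : t ≤ n) : h s ≤ h t := by
  induction t, hst using Nat.le_induction with
  | base => exact le_rfl
  | succ t h2 ih =>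
    exact le_trans (ih (by omega)) (hh.1 t (by omega) (by omega))

/-- in type `A_{n−1}`, a root `β = ε_i − ε_j ∈ Φ_{I_h}` is a minimal root of
`Φ_{I_h}` if and only if `j = h(i) + 1` and `h(i) < h(i+1)`. -/
theorem stmt3 (n : ℕ) (h : ℕ → ℕ) (hh : IsHess n h)
    (i j : ℕ) (hi : 1 ≤ i) (hij : i < j) (hj : j ≤ n) (hmem : h i < j) :
    (∀ γ ∈ hessRoots n h, rootLE n γ (eps i - eps j) → γ = eps i - eps j) ↔
      (j = h i + 1 ∧ h i < h (i + 1)) := by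
  have hhi := hh.2 i hi (by omega)
  constructor
  · intro hmin
    have hj1 : j = h i + 1 := by
      by_contra hne
      have hlt : h i + 1 < j := by omega
      have hγ : eps i - eps (j-1) ∈ hessRoots n h :=
        ⟨i, j-1, hi, by omega, by omega, by omega, rfl⟩
      have hle : rootLE n (eps i - eps (j-1)) (eps i - eps j) :=
        (rootLE_iff hi (by omega) (by omega) hi hij hj).mpr ⟨le_refl i, by omega⟩
      have := eps_sub_inj (a := i) (b := j-1) (by omega) hij (hmin _ hγ hle)
      omega
    refine ⟨hj1, ?_⟩
    by_contra hle
    have hin : i < n := by omega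
    have heq : h (i+1) = h i := le_antisymm (by omega) (hh.1 i hi hin)
    have hhi1 := hh.2 (i+1) (by omega) (by omega)
    have hγ : eps (i+1) - eps j ∈ hessRoots n h :=
      ⟨i+1, j, by omega, by omega, hj, by omega, rfl⟩
    have hrle : rootLE n (eps (i+1) - eps j) (eps i - eps j) :=
      (rootLE_iff (by omega) (by omega) hj hi hij hj).mpr ⟨by omega, le_refl j⟩
    have := eps_sub_inj (a := i+1) (b := j) (by omega) hij (hmin _ hγ hrle)
    omega
  · rintro ⟨hj1, hlt⟩ γ hγ hle
    obtain ⟨a, b, ha1, hab, hbn, hhab, rfl⟩ := hγ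
    obtain ⟨hia, hbj⟩ := (rootLE_iff ha1 hab hbn hi hij hj).mp hle
    have hai : a = i := by
      by_contra hne
      have : h (i+1) ≤ h a := hess_mono hh (by omega) (by omega) (by omega)
      omega
    subst hai
    have : b = j := by omega
    subst this
    rfl
end

section
/- In the type A_{n−1} root system, let h be a Hessenberg function with associated set Φ_{I_h} = {ε_i − ε_j : h(i) < j}, and let 1 ≤ k ≤ n−1. The simple reflection s_k (transposing ε_k and ε_{k+1}) satisfies s_k(Φ_{I_h}) = Φ_{I_h} if and only if h(k) = h(k+1) and k is not in the image of h. -/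
/-- the simple reflection `s_k`, exchanging `ε_k` and `ε_{k+1}` (acting on weights by
swapping the `k`-th and `(k+1)`-st coordinates) -/
def sRefl (k : ℕ) (v : ℕ → ℤ) : ℕ → ℤ :=
  fun m => if m = k then v (k + 1) else if m = k + 1 then v k else v m

/-- the transposition (k, k+1) on indices -/
def swp (k i : ℕ) : ℕ := if i = k then k + 1 else if i = k + 1 then k else i

lemma swp_swp (k i : ℕ) : swp k (swp k i) = i := by
  simp only [swp]; split_ifs <;> omega

lemma sRefl_eps (k i j : ℕ) :
    sRefl k (eps i - eps j) = eps (swp k i) - eps (swp k j) := by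
  funext m
  simp only [sRefl, eps, swp, Pi.sub_apply]
  split_ifs <;> omega

lemma eps_eq {a b i j : ℕ} (hab : a ≠ b) (hij : i < j)
    (e : eps a - eps b = eps i - eps j) : a = i ∧ b = j := by
  have h1 := congrFun e a
  have h2 := congrFun e b
  simp only [eps, Pi.sub_apply] at h1 h2
  split_ifs at h1 h2 <;> omega

/-- in type `A_{n−1}`, the simple reflection `s_k` satisfies
`s_k(Φ_{I_h}) = Φ_{I_h}` if and only if `h(k) = h(k+1)` and `k` is not in the image
of `h`. -/
theorem stmt4 (n : ℕ) (h : ℕ → ℕ) (hh : IsHess n h) (k : ℕ) (hk1 : 1 ≤ k) (hkn : k < n) :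
    sRefl k '' hessRoots n h = hessRoots n h ↔
      (h k = h (k + 1) ∧ ∀ i, 1 ≤ i → i ≤ n → h i ≠ k) := by
  obtain ⟨hmono, hbd⟩ := hh
  constructor
  · intro himg
    have hsub : ∀ v ∈ hessRoots n h, sRefl k v ∈ hessRoots n h := by
      intro v hv
      rw [← himg]; exact ⟨v, hv, rfl⟩
    -- first: h k ≥ k + 1
    have hkk : k + 1 ≤ h k := by
      by_contra hc
      push_neg at hc
      have hm : (eps k - eps (k + 1)) ∈ hessRoots n h :=
        ⟨k, k + 1, hk1, by omega, by omega, by omega, rfl⟩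
      have h2 := hsub _ hm
      rw [sRefl_eps] at h2
      obtain ⟨i, j, hi1, hij, hjn, hhij, e⟩ := h2
      have hs1 : swp k k = k + 1 := by simp only [swp]; split_ifs <;> omega
      have hs2 : swp k (k + 1) = k := by simp only [swp]; split_ifs <;> omega
      rw [hs1, hs2] at e
      obtain ⟨e1, e2⟩ := eps_eq (by omega) hij e
      omega
    -- h k = h (k+1)
    have hkk1 : h k = h (k + 1) := by
      have hle := hmono k hk1 hkn
      have hb1 := hbd (k + 1) (by omega) (by omega)
      by_cases hcn : h k = n
      · omega
      have hbk := hbd k hk1 (le_of_lt hkn)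
      have hm : (eps k - eps (h k + 1)) ∈ hessRoots n h :=
        ⟨k, h k + 1, hk1, by omega, by omega, by omega, rfl⟩
      have h2 := hsub _ hm
      rw [sRefl_eps] at h2
      obtain ⟨i, j, hi1, hij, hjn, hhij, e⟩ := h2
      have hs1 : swp k k = k + 1 := by simp only [swp]; split_ifs <;> omega
      have hs2 : swp k (h k + 1) = h k + 1 := by simp only [swp]; split_ifs <;> omega
      rw [hs1, hs2] at e
      obtain ⟨e1, e2⟩ := eps_eq (by omega) hij e
      subst e1; subst e2
      omega
    refine ⟨hkk1, ?_⟩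
    intro i hi1 hin hik
    have hilek : i ≤ k := le_trans (hbd i hi1 hin).1 (le_of_eq hik)
    have hilt : i < k := by
      rcases lt_or_eq_of_le hilek with h' | h'
      · exact h'
      · subst h'; omega
    have hm : (eps i - eps (k + 1)) ∈ hessRoots n h :=
      ⟨i, k + 1, hi1, by omega, by omega, by omega, rfl⟩
    have h2 := hsub _ hm
    rw [sRefl_eps] at h2
    obtain ⟨i', j', hi1', hij', hjn', hhij', e⟩ := h2
    have hs1 : swp k i = i := by simp only [swp]; split_ifs <;> omega
    have hs2 : swp k (k + 1) = k := by simp only [swp]; split_ifs <;> omega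
    rw [hs1, hs2] at e
    obtain ⟨e1, e2⟩ := eps_eq (by omega) hij' e
    subst e1; subst e2
    omega
  · rintro ⟨heq, hnk⟩
    have hkk : k + 1 ≤ h k := by
      have h1 := hbd k hk1 (le_of_lt hkn)
      have h2 := hnk k hk1 (le_of_lt hkn)
      omega
    have key : ∀ v ∈ hessRoots n h, sRefl k v ∈ hessRoots n h := by
      rintro v ⟨i, j, hi1, hij, hjn, hhij, rfl⟩
      rw [sRefl_eps]
      by_cases hik : i = k
      · -- i = k, so j > h k ≥ k+1, hence j ≥ k+2
        subst hik
        have hs1 : swp i i = i + 1 := by simp only [swp]; split_ifs <;> omega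
        have hs2 : swp i j = j := by simp only [swp]; split_ifs <;> omega
        rw [hs1, hs2]
        exact ⟨i + 1, j, by omega, by omega, hjn, by omega, rfl⟩
      · by_cases hik1 : i = k + 1
        · subst hik1
          have hs1 : swp k (k + 1) = k := by simp only [swp]; split_ifs <;> omega
          have hs2 : swp k j = j := by simp only [swp]; split_ifs <;> omega
          rw [hs1, hs2]
          exact ⟨k, j, hk1, by omega, hjn, by omega, rfl⟩
        · by_cases hjk : j = k
          · subst hjk
            have hs1 : swp j i = i := by simp only [swp]; split_ifs <;> omega
            have hs2 : swp j j = j + 1 := by simp only [swp]; split_ifs <;> omega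
            rw [hs1, hs2]
            exact ⟨i, j + 1, hi1, by omega, by omega, by omega, rfl⟩
          · by_cases hjk1 : j = k + 1
            · subst hjk1
              have hnki := hnk i hi1 (by omega)
              have hs1 : swp k i = i := by simp only [swp]; split_ifs <;> omega
              have hs2 : swp k (k + 1) = k := by simp only [swp]; split_ifs <;> omega
              rw [hs1, hs2]
              exact ⟨i, k, hi1, by omega, by omega, by omega, rfl⟩
            · have hs1 : swp k i = i := by simp only [swp]; split_ifs <;> omega
              have hs2 : swp k j = j := by simp only [swp]; split_ifs <;> omega
              rw [hs1, hs2]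
              exact ⟨i, j, hi1, hij, hjn, hhij, rfl⟩
    apply Set.eq_of_subset_of_subset
    · rintro v ⟨w, hw, rfl⟩
      exact key _ hw
    · intro v hv
      refine ⟨sRefl k v, key _ hv, ?_⟩
      obtain ⟨i, j, _, _, _, _, rfl⟩ := hv
      rw [sRefl_eps, sRefl_eps, swp_swp, swp_swp]
end

section
/- Let G be a group, B ≤ P ≤ G subgroups, and M a B-stable subset of a G-set X on which G acts. Fix x ∈ X and w ∈ G. The set {pwB ∈ G/B : p ∈ P, (pw)⁻¹·x ∈ M} is in natural bijection with {p(P ∩ wBw⁻¹) ∈ P/(P ∩ wBw⁻¹) : p⁻¹·x ∈ wM ∩ X_P}, whenever X_P ⊆ X is a P-stable subset with p⁻¹·x ∈ X_P for all p ∈ P. -/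
open Pointwise

/-- Let `G` be a group acting on a set `X`, `B ≤ P ≤ G` subgroups, `M` a
`B`-stable subset of `X`, `x ∈ X` and `w ∈ G`.  The set
`{pwB ∈ G/B : p ∈ P, (pw)⁻¹·x ∈ M}` is in bijection with
`{p(P ∩ wBw⁻¹) ∈ P/(P ∩ wBw⁻¹) : p⁻¹·x ∈ wM ∩ X_P}`, whenever `X_P ⊆ X` is a `P`-stable
subset with `p⁻¹·x ∈ X_P` for all `p ∈ P`. -/
theorem stmt17 {G X : Type*} [Group G] [MulAction G X]
    (B P : Subgroup G) (hBP : B ≤ P)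
    (M : Set X) (hM : ∀ b ∈ B, b • M = M)
    (XP : Set X) (hXP : ∀ p ∈ P, p • XP = XP)
    (x : X) (hx : ∀ p ∈ P, p⁻¹ • x ∈ XP)
    (w : G) :
    Nonempty
      (({y : G ⧸ B | ∃ p ∈ P, y = QuotientGroup.mk (p * w) ∧ (p * w)⁻¹ • x ∈ M}) ≃
       ({y : G ⧸ (P ⊓ B.map (MulAut.conj w).toMonoidHom) |
          ∃ p ∈ P, y = QuotientGroup.mk p ∧ p⁻¹ • x ∈ (w • M) ∩ XP})) := by
  set Q : Subgroup G := P ⊓ B.map (MulAut.conj w).toMonoidHom with hQ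
  -- the map G ⧸ Q → G ⧸ B, g Q ↦ (g w) B
  let F : G ⧸ Q → G ⧸ B := Quotient.map' (fun g => g * w) (by
    intro a b hab
    rw [QuotientGroup.leftRel_apply] at hab
    rw [QuotientGroup.leftRel_apply]
    obtain ⟨-, c, hcB, hc⟩ := hab
    have hc' : a⁻¹ * b = w * c * w⁻¹ := by rw [← hc]; simp [MulAut.conj]
    have heq : (a * w)⁻¹ * (b * w) = w⁻¹ * (a⁻¹ * b) * w := by group
    have heq2 : w⁻¹ * (w * c * w⁻¹) * w = c := by group
    rw [heq, hc', heq2]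
    exact hcB)
  have hFmk : ∀ g : G, F (QuotientGroup.mk g) = QuotientGroup.mk (g * w) := fun g => rfl
  -- the forward map on subtypes (from the second set to the first)
  have key : ∀ y : G ⧸ Q, y ∈ {y : G ⧸ Q |
      ∃ p ∈ P, y = QuotientGroup.mk p ∧ p⁻¹ • x ∈ (w • M) ∩ XP} →
      F y ∈ {y : G ⧸ B | ∃ p ∈ P, y = QuotientGroup.mk (p * w) ∧ (p * w)⁻¹ • x ∈ M} := by
    rintro y ⟨p, hp, rfl, ⟨⟨m, hmM, hm⟩, -⟩⟩
    refine ⟨p, hp, (hFmk p).symm ▸ rfl, ?_⟩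
    have h1 : (p * w)⁻¹ • x = w⁻¹ • (p⁻¹ • x) := by rw [mul_inv_rev, mul_smul]
    have h2 : w⁻¹ • (p⁻¹ • x) = m := by rw [← hm]; exact inv_smul_smul w m
    rw [h1, h2]
    exact hmM
  let e : {y : G ⧸ Q | ∃ p ∈ P, y = QuotientGroup.mk p ∧ p⁻¹ • x ∈ (w • M) ∩ XP} →
      {y : G ⧸ B | ∃ p ∈ P, y = QuotientGroup.mk (p * w) ∧ (p * w)⁻¹ • x ∈ M} :=
    fun z => ⟨F z.1, key z.1 z.2⟩
  have hinj : Function.Injective e := by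
    intro z1 z2 h
    obtain ⟨p1, hp1, hy1, -⟩ := z1.2
    obtain ⟨p2, hp2, hy2, -⟩ := z2.2
    have h' : (QuotientGroup.mk (p1 * w) : G ⧸ B) = QuotientGroup.mk (p2 * w) := by
      have hval : F z1.1 = F z2.1 := congrArg Subtype.val h
      rw [hy1, hy2, hFmk, hFmk] at hval
      exact hval
    rw [QuotientGroup.eq] at h'
    have hB : w⁻¹ * (p1⁻¹ * p2) * w ∈ B := by
      have heq : (p1 * w)⁻¹ * (p2 * w) = w⁻¹ * (p1⁻¹ * p2) * w := by group
      rwa [heq] at h'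
    have hQmem : p1⁻¹ * p2 ∈ Q := by
      rw [hQ, Subgroup.mem_inf]
      refine ⟨mul_mem (inv_mem hp1) hp2, Subgroup.mem_map.mpr ⟨w⁻¹ * (p1⁻¹ * p2) * w, hB, ?_⟩⟩
      simp [MulAut.conj]
      group
    refine Subtype.ext ?_
    rw [hy1, hy2]
    exact (QuotientGroup.eq ..).mpr hQmem
  have hsurj : Function.Surjective e := by
    rintro ⟨z, p, hp, rfl, hmem⟩
    refine ⟨⟨QuotientGroup.mk p, p, hp, rfl, ?_, hx p hp⟩, ?_⟩
    · refine ⟨(p * w)⁻¹ • x, hmem, ?_⟩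
      show w • ((p * w)⁻¹ • x) = p⁻¹ • x
      rw [mul_inv_rev, mul_smul, smul_inv_smul]
    · exact Subtype.ext (hFmk p)
  exact ⟨(Equiv.ofBijective e ⟨hinj, hsurj⟩).symm⟩
end
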